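/- Let M be a length-one ℤ[t]-module with 2ⁿ·M = 0 for some n. Then Ext¹_{ℤ[t]}(M, ℚ[t]/ℤ[t]) = 0; that is, every extension of ℤ[t]-modules 0 → ℚ[t]/ℤ[t] → E → M → 0 splits. -/

import Mathlib

/-!
Present `M` as `F₀ / f(F₁)` with `F₀, F₁` free. Lifting `F₀ → M` to `F₀ → E` and restricting to
`F₁` gives a map `φ : F₁ → ℚ[t]/ℤ[t]`; if `φ` extends to `ψ` on `F₀`, the lift minus `ψ` kills
`f(F₁)` and descends to a section.
Since `2ⁿ` kills `M`, there is `f' : F₀ → F₁` with `f' ∘ f = 2ⁿ`. Lifting `φ` to `ℚ[t]` (where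
`2ⁿ` is invertible) and dividing `φ ∘ f'` by `2ⁿ` gives the extension.
-/

noncomputable instance : Algebra (Polynomial ℤ) (Polynomial ℚ) :=
  (Polynomial.mapRingHom (Int.castRingHom ℚ)).toAlgebra

/-- The `ℤ[t]`-module `ℚ[t]/ℤ[t]`. -/
noncomputable abbrev QtZt : Type :=
  Polynomial ℚ ⧸ LinearMap.range (Algebra.linearMap (Polynomial ℤ) (Polynomial ℚ))

/-- An `R`-module `M` has *length one* if there is a short exact sequence
`0 → F₁ → F₀ → M → 0` with `F₀`, `F₁` finitely generated free `R`-modules. -/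
def IsLengthOne (R M : Type*) [CommRing R] [AddCommGroup M] [Module R M] : Prop :=
  ∃ (k l : ℕ) (f : (Fin k → R) →ₗ[R] (Fin l → R)) (g : (Fin l → R) →ₗ[R] M),
    Function.Injective f ∧ Function.Surjective g ∧ LinearMap.range f = LinearMap.ker g

namespace LinearMap

theorem exists_comp_eq_of_range_le {R A B C : Type*} [Semiring R] [AddCommMonoid A] [Module R A]
    [AddCommMonoid B] [Module R B] [AddCommMonoid C] [Module R C] {i : A →ₗ[R] B}
    (hi : Function.Injective i) {h : C →ₗ[R] B} (hle : range h ≤ range i) :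
    ∃ φ : C →ₗ[R] A, i ∘ₗ φ = h :=
  ⟨(LinearEquiv.ofInjective i hi).symm.toLinearMap ∘ₗ h.codRestrict _ fun x => hle ⟨x, rfl⟩,
    ext fun x => by simp⟩

theorem exists_comp_eq_of_ker_le {R A B C : Type*} [Ring R] [AddCommGroup A] [Module R A]
    [AddCommGroup B] [Module R B] [AddCommGroup C] [Module R C] {g : A →ₗ[R] B}
    (hg : Function.Surjective g) {h : A →ₗ[R] C} (hle : ker g ≤ ker h) :
    ∃ s : B →ₗ[R] C, s ∘ₗ g = h := by
  refine ⟨(ker g).liftQ h hle ∘ₗ (g.quotKerEquivOfSurjective hg).symm.toLinearMap,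
    ext fun x => ?_⟩
  have hmk : (g.quotKerEquivOfSurjective hg).symm (g x) = Submodule.Quotient.mk x :=
    (LinearEquiv.symm_apply_eq _).2 rfl
  simp [hmk]

end LinearMap

section Semiring

variable {R F₁ F₀ P Q : Type*} [Semiring R] [AddCommMonoid F₁] [Module R F₁]
  [AddCommMonoid F₀] [Module R F₀] [AddCommMonoid P] [Module R P] [AddCommMonoid Q] [Module R Q]

theorem forall_exists_comp_eq_of_surjective [Module.Projective R F₁] {f : F₁ →ₗ[R] F₀}
    (hext : ∀ φ : F₁ →ₗ[R] P, ∃ ψ : F₀ →ₗ[R] P, ψ ∘ₗ f = φ) {π : P →ₗ[R] Q}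
    (hπ : Function.Surjective π) (φ : F₁ →ₗ[R] Q) : ∃ ψ : F₀ →ₗ[R] Q, ψ ∘ₗ f = φ := by
  obtain ⟨φ', rfl⟩ := Module.projective_lifting_property π φ hπ
  obtain ⟨ψ', rfl⟩ := hext φ'
  exact ⟨π ∘ₗ ψ', rfl⟩

end Semiring

section CommSemiring

variable {R F₁ F₀ M P : Type*} [CommSemiring R] [AddCommMonoid F₁] [Module R F₁]
  [AddCommMonoid F₀] [Module R F₀] [AddCommMonoid M] [Module R M] [AddCommMonoid P] [Module R P]

theorem exists_comp_eq_smul_id_of_smul_eq_zero {f : F₁ →ₗ[R] F₀} (hf : Function.Injective f)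
    {g : F₀ →ₗ[R] M} (hfg : LinearMap.range f = LinearMap.ker g) {r : R}
    (hr : ∀ x : M, r • x = 0) : ∃ f' : F₀ →ₗ[R] F₁, f' ∘ₗ f = r • LinearMap.id := by
  obtain ⟨f', hf'⟩ := LinearMap.exists_comp_eq_of_range_le hf (h := r • LinearMap.id) <| by
    rintro _ ⟨x, rfl⟩
    simpa [hfg] using hr (g x)
  refine ⟨f', LinearMap.ext fun y => hf ?_⟩
  simpa using LinearMap.congr_fun hf' (f y)

theorem exists_comp_eq_of_isUnit_algebraMap {f : F₁ →ₗ[R] F₀} {f' : F₀ →ₗ[R] F₁} {r : R}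
    (hf' : f' ∘ₗ f = r • LinearMap.id) (hr : IsUnit (algebraMap R (Module.End R P) r))
    (φ : F₁ →ₗ[R] P) : ∃ ψ : F₀ →ₗ[R] P, ψ ∘ₗ f = φ := by
  obtain ⟨u, hu⟩ := hr
  refine ⟨(↑u⁻¹ : Module.End R P) ∘ₗ φ ∘ₗ f', LinearMap.ext fun y => ?_⟩
  have hf'y : f' (f y) = r • y := LinearMap.congr_fun hf' y
  have huy : (u : Module.End R P) (φ y) = r • φ y := by
    rw [hu, Module.algebraMap_end_apply]
  rw [LinearMap.comp_apply, LinearMap.comp_apply, LinearMap.comp_apply, hf'y, map_smul, ← huy,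
    ← Module.End.mul_apply, Units.inv_mul, Module.End.one_apply]

end CommSemiring

theorem exists_section_of_forall_exists_comp_eq {R F₁ F₀ M Q E : Type*} [Ring R]
    [AddCommGroup F₁] [Module R F₁] [AddCommGroup F₀] [Module R F₀] [Module.Projective R F₀]
    [AddCommGroup M] [Module R M] [AddCommGroup Q] [Module R Q] [AddCommGroup E] [Module R E]
    {f : F₁ →ₗ[R] F₀} {g : F₀ →ₗ[R] M} (hg : Function.Surjective g)
    (hfg : LinearMap.range f = LinearMap.ker g)
    (hext : ∀ φ : F₁ →ₗ[R] Q, ∃ ψ : F₀ →ₗ[R] Q, ψ ∘ₗ f = φ)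
    {i : Q →ₗ[R] E} {p : E →ₗ[R] M} (hi : Function.Injective i) (hp : Function.Surjective p)
    (hexact : LinearMap.range i = LinearMap.ker p) :
    ∃ s : M →ₗ[R] E, p ∘ₗ s = LinearMap.id := by
  obtain ⟨h, hph⟩ := Module.projective_lifting_property p g hp
  have hgf (y : F₁) : g (f y) = 0 := by
    rw [← LinearMap.mem_ker, ← hfg]
    exact ⟨y, rfl⟩
  obtain ⟨φ, hφ⟩ := LinearMap.exists_comp_eq_of_range_le hi (h := h ∘ₗ f) <| by
    rintro _ ⟨y, rfl⟩
    rw [hexact, LinearMap.mem_ker, ← hgf y, ← hph]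
    rfl
  obtain ⟨ψ, hψ⟩ := hext φ
  obtain ⟨s, hs⟩ := LinearMap.exists_comp_eq_of_ker_le hg (h := h - i ∘ₗ ψ) <| by
    rw [← hfg]
    rintro _ ⟨y, rfl⟩
    have hψy : ψ (f y) = φ y := LinearMap.congr_fun hψ y
    have hφy : i (φ y) = h (f y) := LinearMap.congr_fun hφ y
    simp [hψy, hφy]
  refine ⟨s, LinearMap.ext fun m => ?_⟩
  obtain ⟨x, rfl⟩ := hg m
  have hsx : s (g x) = h x - i (ψ x) := LinearMap.congr_fun hs x
  have hphx : p (h x) = g x := LinearMap.congr_fun hph x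
  have hpi : p (i (ψ x)) = 0 := by
    rw [← LinearMap.mem_ker, ← hexact]
    exact ⟨ψ x, rfl⟩
  simp [hsx, hphx, hpi]

theorem isUnit_algebraMap_two_pow_end_polynomial_rat (n : ℕ) :
    IsUnit (algebraMap (Polynomial ℤ) (Module.End (Polynomial ℤ) (Polynomial ℚ)) (2 ^ n)) := by
  rw [map_pow, map_ofNat]
  refine IsUnit.pow n ?_
  rw [Module.End.isUnit_iff]
  convert (isUnit_of_invertible (2 : ℚ)).smul_bijective (β := Polynomial ℚ) using 1
  ext x : 1
  simp only [Module.End.ofNat_apply, two_smul]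

theorem ext_one_vanishes
    (M : Type) [AddCommGroup M] [Module (Polynomial ℤ) M]
    (n : ℕ) (hM : IsLengthOne (Polynomial ℤ) M)
    (hexp : ∀ x : M, (2 : Polynomial ℤ) ^ n • x = 0)
    (E : Type) [AddCommGroup E] [Module (Polynomial ℤ) E]
    (i : QtZt →ₗ[Polynomial ℤ] E) (p : E →ₗ[Polynomial ℤ] M)
    (hi : Function.Injective i) (hp : Function.Surjective p)
    (hexact : LinearMap.range i = LinearMap.ker p) :
    ∃ s : M →ₗ[Polynomial ℤ] E, p ∘ₗ s = LinearMap.id := by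
  obtain ⟨k, l, f, g, hf, hg, hfg⟩ := hM
  obtain ⟨f', hf'⟩ := exists_comp_eq_smul_id_of_smul_eq_zero hf hfg hexp
  have hext := forall_exists_comp_eq_of_surjective
    (exists_comp_eq_of_isUnit_algebraMap hf' (isUnit_algebraMap_two_pow_end_polynomial_rat n))
    (Submodule.mkQ_surjective (LinearMap.range (Algebra.linearMap _ (Polynomial ℚ))))
  exact exists_section_of_forall_exists_comp_eq hg hfg hext hi hp hexact
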